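/- Catalan-weighted bound for the Taylor-coefficient recursion of self-similar Burgers: There is an absolute constant D₀ ≥ 1 with the following property. Let D ≥ D₀ and let a : ℕ³ → ℝ satisfy: a(0) = 0; a(e₁) = −1, a(e₂) = a(e₃) = 0; a(α) = 0 for all α with |α| = 2; |a(α)| ≤ C_{α₁}C_{α₂}C_{α₃} D for all α with |α| = 3; and, for every multi-index α with |α| ≥ 4, the recursion a(α) = (2/(3 − |α|)) Σ a(β)·γ₁·a(γ), where the sum ranges over all pairs (β,γ) ∈ ℕ³ × ℕ³ with β + γ = α + e₁, β ≠ α and γ ≠ α. Then for every multi-index α with |α| ≥ 2 one has |a(α)| ≤ C_{α₁}C_{α₂}C_{α₃} D^{|α|−2}, where C_n denotes the n-th Catalan number. -/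
import Mathlib


noncomputable section

/-- The size `|α| = α₁ + α₂ + α₃` of a multi-index `α ∈ ℕ³`. -/
def mSize (m : Fin 3 → ℕ) : ℕ := m 0 + m 1 + m 2

/-- The unit multi-index `e₁`. -/
def me1 : Fin 3 → ℕ := Pi.single 0 1

/-- The unit multi-index `e₂`. -/
def me2 : Fin 3 → ℕ := Pi.single 1 1

/-- The unit multi-index `e₃`. -/
def me3 : Fin 3 → ℕ := Pi.single 2 1

lemma catalan_succ_le' (n : ℕ) : catalan (n + 1) ≤ 4 * catalan n := by
  have h1 : (n + 2) * catalan (n + 1) = (n + 1).centralBinom :=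
    succ_mul_catalan_eq_centralBinom (n + 1)
  have h2 : (n + 1) * (n + 1).centralBinom = 2 * (2 * n + 1) * n.centralBinom :=
    Nat.succ_mul_centralBinom_succ n
  have h3 : (n + 1) * catalan n = n.centralBinom := succ_mul_catalan_eq_centralBinom n
  have key : (n + 1) * ((n + 2) * catalan (n + 1)) ≤ (n + 1) * ((n + 2) * (4 * catalan n)) := by
    rw [h1]
    calc (n + 1) * (n + 1).centralBinom = 2 * (2 * n + 1) * n.centralBinom := h2
      _ = 2 * (2 * n + 1) * ((n + 1) * catalan n) := by rw [h3]
      _ ≤ (n + 1) * ((n + 2) * (4 * catalan n)) := by nlinarith [Nat.zero_le (catalan n)]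
  exact Nat.le_of_mul_le_mul_left (Nat.le_of_mul_le_mul_left key (by omega)) (by omega)

lemma catalan_conv (k : ℕ) :
    ∑ j ∈ Finset.range (k + 1), catalan j * catalan (k - j) = catalan (k + 1) := by
  rw [catalan_succ']
  rw [Finset.Nat.sum_antidiagonal_eq_sum_range_succ_mk (fun ij => catalan ij.1 * catalan ij.2) k]

lemma icc_range' (k : ℕ) : Finset.Icc 0 k = Finset.range (k + 1) := by
  ext x; simp

lemma icc_sum3 (M : Fin 3 → ℕ) :
    ∑ β ∈ Finset.Icc (0 : Fin 3 → ℕ) M,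
      (catalan (β 0) * catalan (β 1) * catalan (β 2)) *
      (catalan (M 0 - β 0) * catalan (M 1 - β 1) * catalan (M 2 - β 2))
    = catalan (M 0 + 1) * catalan (M 1 + 1) * catalan (M 2 + 1) := by
  have h : ∀ β : Fin 3 → ℕ,
      (catalan (β 0) * catalan (β 1) * catalan (β 2)) *
      (catalan (M 0 - β 0) * catalan (M 1 - β 1) * catalan (M 2 - β 2))
      = ∏ i : Fin 3, (catalan (β i) * catalan (M i - β i)) := by
    intro β; rw [Fin.prod_univ_three]; ring
  simp_rw [h, Pi.Icc_eq]
  simp_rw [Pi.zero_apply, icc_range']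
  rw [← Finset.prod_univ_sum (fun i => Finset.range (M i + 1))
    (fun i j => catalan j * catalan (M i - j))]
  rw [Fin.prod_univ_three]
  simp_rw [catalan_conv]

lemma ext3 {v w : Fin 3 → ℕ} (h0 : v 0 = w 0) (h1 : v 1 = w 1) (h2 : v 2 = w 2) : v = w := by
  funext i; fin_cases i <;> assumption

lemma me1_0 : me1 0 = 1 := by simp [me1]
lemma me1_1 : me1 1 = 0 := by simp [me1, Pi.single_apply]
lemma me1_2 : me1 2 = 0 := by simp [me1, Pi.single_apply]

lemma aSmallZero (a : (Fin 3 → ℕ) → ℝ) (h0 : a 0 = 0) (he2 : a me2 = 0) (he3 : a me3 = 0)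
    (h2 : ∀ m : Fin 3 → ℕ, mSize m = 2 → a m = 0) :
    ∀ v : Fin 3 → ℕ, mSize v ≤ 2 → v ≠ me1 → a v = 0 := by
  intro v hv hne
  unfold mSize at hv
  interval_cases h : (v 0 + v 1 + v 2)
  · have : v = 0 := by funext i; fin_cases i <;> simp <;> omega
    rw [this, h0]
  · -- size 1
    rcases Nat.lt_or_ge (v 0) 1 with h0' | h0'
    · rcases Nat.lt_or_ge (v 1) 1 with h1' | h1'
      · have : v = me3 := ext3 (by simp [me3, Pi.single_apply]; omega)
          (by simp [me3, Pi.single_apply]; omega) (by simp [me3]; omega)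
        rw [this, he3]
      · have : v = me2 := ext3 (by simp [me2, Pi.single_apply]; omega)
          (by simp [me2]; omega) (by simp [me2, Pi.single_apply]; omega)
        rw [this, he2]
    · exact absurd (ext3 (by rw [me1_0]; omega) (by rw [me1_1]; omega)
        (by rw [me1_2]; omega)) hne
  · exact h2 v (by unfold mSize; omega)


/-- Catalan-weighted bound for the Taylor-coefficient recursion of the stationary 3D
self-similar Burgers equation: there is an absolute constant `D₀ ≥ 1` such that for all
`D ≥ D₀` and any coefficients `a(α)` satisfying the normalization at orders `≤ 2`, the
bound `|a(α)| ≤ C_{α₁}C_{α₂}C_{α₃} D` at order `3`, and the recursion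
`a(α) = (2/(3 − |α|)) Σ_{β+γ=α+e₁, β≠α, γ≠α} a(β) γ₁ a(γ)` for `|α| ≥ 4`, one has
`|a(α)| ≤ C_{α₁}C_{α₂}C_{α₃} D^{|α|−2}` for every `|α| ≥ 2`, where `C_n` is the `n`-th
Catalan number.  (The sum over pairs `(β,γ)` with `β + γ = α + e₁` is realized by
summing over `β ≤ α + e₁` and setting `γ = α + e₁ − β`.) -/
theorem catalan_bound_for_burgers_coefficients :
    ∃ D₀ : ℝ, 1 ≤ D₀ ∧
      ∀ D : ℝ, D₀ ≤ D →
        ∀ a : (Fin 3 → ℕ) → ℝ,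
          a 0 = 0 →
          a me1 = -1 → a me2 = 0 → a me3 = 0 →
          (∀ m : Fin 3 → ℕ, mSize m = 2 → a m = 0) →
          (∀ m : Fin 3 → ℕ, mSize m = 3 →
            |a m| ≤ (catalan (m 0) * catalan (m 1) * catalan (m 2) : ℕ) * D) →
          (∀ m : Fin 3 → ℕ, 4 ≤ mSize m →
            a m = 2 / (3 - (mSize m : ℝ)) *
              ∑ β ∈ (Finset.Icc 0 (m + me1)).filter
                  (fun β => β ≠ m ∧ m + me1 - β ≠ m),
                a β * (((m + me1 - β) 0 : ℕ) : ℝ) * a (m + me1 - β)) →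
          ∀ m : Fin 3 → ℕ, 2 ≤ mSize m →
            |a m| ≤ (catalan (m 0) * catalan (m 1) * catalan (m 2) : ℕ) *
              D ^ (mSize m - 2) := by
  refine ⟨1024, by norm_num, ?_⟩
  intro D hD a h0 he1 he2 he3 h2 h3 hrec
  have hD0 : (0:ℝ) ≤ D := by linarith
  suffices H : ∀ n : ℕ, ∀ m : Fin 3 → ℕ, mSize m = n → 2 ≤ n →
      |a m| ≤ (catalan (m 0) * catalan (m 1) * catalan (m 2) : ℕ) * D ^ (n - 2) by
    intro m hm
    exact H (mSize m) m rfl hm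
  intro n
  induction n using Nat.strong_induction_on with
  | _ n IH =>
  intro m hmn hn2
  by_cases hn3 : n ≤ 3
  · interval_cases n
    · rw [h2 m hmn, abs_zero]
      exact mul_nonneg (by positivity) (pow_nonneg hD0 _)
    · simpa using h3 m hmn
  · push_neg at hn3
    have hn4 : 4 ≤ n := hn3
    have hnr4 : (4:ℝ) ≤ (n:ℝ) := by exact_mod_cast hn4
    have hr := hrec m (by omega)
    rw [hmn] at hr
    set M : Fin 3 → ℕ := m + me1 with hM
    have hM0 : M 0 = m 0 + 1 := by simp [hM, me1_0]
    have hM1 : M 1 = m 1 := by simp [hM, me1_1]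
    have hM2 : M 2 = m 2 := by simp [hM, me1_2]
    have hmsz : m 0 + m 1 + m 2 = n := hmn
    set S := (Finset.Icc (0 : Fin 3 → ℕ) M).filter (fun β => β ≠ m ∧ M - β ≠ m) with hS
    set K : ℝ := ((n:ℝ) - 2) * D ^ (n - 3) with hK
    have hKnn : 0 ≤ K := mul_nonneg (by linarith) (pow_nonneg hD0 _)
    have key : ∀ β ∈ S, |a β * (((M - β) 0 : ℕ) : ℝ) * a (M - β)| ≤
        K * (((catalan (β 0) * catalan (β 1) * catalan (β 2) : ℕ) : ℝ) *
             ((catalan ((M - β) 0) * catalan ((M - β) 1) * catalan ((M - β) 2) : ℕ) : ℝ)) := by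
      intro β hβ
      rw [hS, Finset.mem_filter, Finset.mem_Icc] at hβ
      obtain ⟨⟨_, hβle⟩, hβne, hγne⟩ := hβ
      have hb0 : β 0 ≤ M 0 := hβle 0
      have hb1 : β 1 ≤ M 1 := hβle 1
      have hb2 : β 2 ≤ M 2 := hβle 2
      have hg0 : (M - β) 0 = M 0 - β 0 := rfl
      have hg1 : (M - β) 1 = M 1 - β 1 := rfl
      have hg2 : (M - β) 2 = M 2 - β 2 := rfl
      have hnncat : (0:ℝ) ≤ ((catalan (β 0) * catalan (β 1) * catalan (β 2) : ℕ) : ℝ) *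
             ((catalan ((M - β) 0) * catalan ((M - β) 1) * catalan ((M - β) 2) : ℕ) : ℝ) := by
        positivity
      have hsβγ : mSize β + mSize (M - β) = n + 1 := by
        unfold mSize
        rw [hg0, hg1, hg2]
        omega
      by_cases hsβ : mSize β ≤ 2
      · have hβnee1 : β ≠ me1 := by
          intro hb
          apply hγne
          refine ext3 ?_ ?_ ?_
          · rw [hg0, hb, me1_0, hM0]; omega
          · rw [hg1, hb, me1_1, hM1]; omega
          · rw [hg2, hb, me1_2, hM2]; omega
        rw [aSmallZero a h0 he2 he3 h2 β hsβ hβnee1]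
        simpa using mul_nonneg hKnn hnncat
      · by_cases hsγ : mSize (M - β) ≤ 2
        · have hγnee1 : M - β ≠ me1 := by
            intro hb
            apply hβne
            have g0 := congrFun hb 0
            have g1 := congrFun hb 1
            have g2 := congrFun hb 2
            rw [hg0, me1_0] at g0
            rw [hg1, me1_1] at g1
            rw [hg2, me1_2] at g2
            refine ext3 ?_ ?_ ?_ <;> omega
          rw [aSmallZero a h0 he2 he3 h2 (M - β) hsγ hγnee1]
          simpa using mul_nonneg hKnn hnncat
        · push_neg at hsβ hsγ
          have ihβ := IH (mSize β) (by omega) β rfl (by omega)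
          have ihγ := IH (mSize (M - β)) (by omega) (M - β) rfl (by omega)
          have hcb : (0:ℝ) ≤ ((catalan (β 0) * catalan (β 1) * catalan (β 2) : ℕ) : ℝ) *
              D ^ (mSize β - 2) := le_trans (abs_nonneg _) ihβ
          have hγ0le : (((M - β) 0 : ℕ) : ℝ) ≤ (n:ℝ) - 2 := by
            have h1 : (M - β) 0 ≤ mSize (M - β) := by unfold mSize; omega
            have h2' : mSize (M - β) ≤ n - 2 := by omega
            have : ((M - β) 0 : ℕ) ≤ n - 2 := le_trans h1 h2'
            have := (Nat.cast_le (α := ℝ)).2 this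
            rw [Nat.cast_sub (by omega)] at this
            simpa using this
          rw [abs_mul, abs_mul, Nat.abs_cast]
          calc |a β| * (((M - β) 0 : ℕ) : ℝ) * |a (M - β)|
              ≤ (((catalan (β 0) * catalan (β 1) * catalan (β 2) : ℕ) : ℝ) * D ^ (mSize β - 2))
                * ((n:ℝ) - 2) *
                (((catalan ((M - β) 0) * catalan ((M - β) 1) * catalan ((M - β) 2) : ℕ) : ℝ)
                  * D ^ (mSize (M - β) - 2)) := by
                apply mul_le_mul _ ihγ (abs_nonneg _)
                  (mul_nonneg hcb (by linarith))
                exact mul_le_mul ihβ hγ0le (by positivity) hcb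
            _ = K * (((catalan (β 0) * catalan (β 1) * catalan (β 2) : ℕ) : ℝ) *
             ((catalan ((M - β) 0) * catalan ((M - β) 1) * catalan ((M - β) 2) : ℕ) : ℝ)) := by
                rw [hK]
                have hp : D ^ (mSize β - 2) * D ^ (mSize (M - β) - 2) = D ^ (n - 3) := by
                  rw [← pow_add]; congr 1; omega
                rw [← hp]; ring
    -- sum the bound
    have habs : |(2:ℝ) / (3 - (n:ℝ))| = 2 / ((n:ℝ) - 3) := by
      rw [abs_div, abs_of_pos (by norm_num : (0:ℝ) < 2), abs_sub_comm,
        abs_of_pos (by linarith : (0:ℝ) < (n:ℝ) - 3)]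
    have hsum1 : |∑ β ∈ S, a β * (((M - β) 0 : ℕ) : ℝ) * a (M - β)| ≤
        ∑ β ∈ S, K * (((catalan (β 0) * catalan (β 1) * catalan (β 2) : ℕ) : ℝ) *
             ((catalan ((M - β) 0) * catalan ((M - β) 1) * catalan ((M - β) 2) : ℕ) : ℝ)) :=
      le_trans (Finset.abs_sum_le_sum_abs _ _) (Finset.sum_le_sum key)
    have hsum2 : ∑ β ∈ S, K * (((catalan (β 0) * catalan (β 1) * catalan (β 2) : ℕ) : ℝ) *
             ((catalan ((M - β) 0) * catalan ((M - β) 1) * catalan ((M - β) 2) : ℕ) : ℝ)) ≤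
        ∑ β ∈ Finset.Icc (0 : Fin 3 → ℕ) M,
          K * (((catalan (β 0) * catalan (β 1) * catalan (β 2) : ℕ) : ℝ) *
             ((catalan ((M - β) 0) * catalan ((M - β) 1) * catalan ((M - β) 2) : ℕ) : ℝ)) := by
      apply Finset.sum_le_sum_of_subset_of_nonneg (by rw [hS]; exact Finset.filter_subset _ _)
      intro β _ _
      exact mul_nonneg hKnn (by positivity)
    have hsum3 : ∑ β ∈ Finset.Icc (0 : Fin 3 → ℕ) M,
          K * (((catalan (β 0) * catalan (β 1) * catalan (β 2) : ℕ) : ℝ) *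
             ((catalan ((M - β) 0) * catalan ((M - β) 1) * catalan ((M - β) 2) : ℕ) : ℝ)) =
        K * ((catalan (M 0 + 1) * catalan (M 1 + 1) * catalan (M 2 + 1) : ℕ) : ℝ) := by
      rw [← Finset.mul_sum]
      congr 1
      rw [← icc_sum3 M]
      push_cast
      rfl
    have hcat : ((catalan (M 0 + 1) * catalan (M 1 + 1) * catalan (M 2 + 1) : ℕ) : ℝ) ≤
        256 * ((catalan (m 0) * catalan (m 1) * catalan (m 2) : ℕ) : ℝ) := by
      have hnat : catalan (M 0 + 1) * catalan (M 1 + 1) * catalan (M 2 + 1) ≤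
          256 * (catalan (m 0) * catalan (m 1) * catalan (m 2)) := by
        rw [hM0, hM1, hM2]
        calc catalan (m 0 + 1 + 1) * catalan (m 1 + 1) * catalan (m 2 + 1)
            ≤ (4 * (4 * catalan (m 0))) * (4 * catalan (m 1)) * (4 * catalan (m 2)) := by
              refine Nat.mul_le_mul (Nat.mul_le_mul ?_ (catalan_succ_le' _)) (catalan_succ_le' _)
              exact le_trans (catalan_succ_le' _) (Nat.mul_le_mul_left 4 (catalan_succ_le' _))
          _ = 256 * (catalan (m 0) * catalan (m 1) * catalan (m 2)) := by ring
      exact_mod_cast hnat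
    set X : ℝ := ((catalan (m 0) * catalan (m 1) * catalan (m 2) : ℕ) : ℝ) with hX
    have hXnn : (0:ℝ) ≤ X := by rw [hX]; positivity
    have hPnn : (0:ℝ) ≤ D ^ (n - 3) := pow_nonneg hD0 _
    have hfin : |a m| ≤ 2 / ((n:ℝ) - 3) * (K * (256 * X)) := by
      rw [hr, abs_mul, habs]
      apply mul_le_mul_of_nonneg_left _ (div_nonneg (by norm_num) (by linarith : (0:ℝ) ≤ (n:ℝ) - 3))
      calc |∑ β ∈ S, a β * (((M - β) 0 : ℕ) : ℝ) * a (M - β)| ≤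
            K * ((catalan (M 0 + 1) * catalan (M 1 + 1) * catalan (M 2 + 1) : ℕ) : ℝ) :=
          le_trans hsum1 (le_trans hsum2 (le_of_eq hsum3))
        _ ≤ K * (256 * X) := mul_le_mul_of_nonneg_left hcat hKnn
    refine le_trans hfin ?_
    have hpow : D ^ (n - 2) = D ^ (n - 3) * D := by
      rw [show n - 2 = (n - 3) + 1 from by omega, pow_succ]
    rw [hpow, hK]
    have h4 : 2 / ((n:ℝ) - 3) * ((n:ℝ) - 2) ≤ 4 := by
      rw [div_mul_eq_mul_div, div_le_iff₀ (by linarith : (0:ℝ) < (n:ℝ) - 3)]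
      linarith
    calc 2 / ((n:ℝ) - 3) * (((n:ℝ) - 2) * D ^ (n - 3) * (256 * X))
        = (2 / ((n:ℝ) - 3) * ((n:ℝ) - 2)) * (256 * (D ^ (n - 3) * X)) := by ring
      _ ≤ 4 * (256 * (D ^ (n - 3) * X)) := by
          exact mul_le_mul_of_nonneg_right h4 (by positivity)
      _ = 1024 * (D ^ (n - 3) * X) := by ring
      _ ≤ D * (D ^ (n - 3) * X) := mul_le_mul_of_nonneg_right (by linarith)
          (mul_nonneg hPnn hXnn)
      _ = X * (D ^ (n - 3) * D) := by ring
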